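/- arXiv:2511.09370 — 2 statements merged into one kernel-verified Lean document; each statement's English description precedes it below -/
import Mathlib

section
/- For real f, φ with sin(2π f T_s) ≠ 0, integers 0 ≤ p < N, the trigonometric sum ∑_{n=p+1}^{N} cos(2π f n T_s + φ)·cos(2π f (n−p) T_s + φ) equals (1/2)·[ cos(2π f (N+1) T_s + 2φ) · sin(2π f (N−p) T_s)/sin(2π f T_s) + (N−p)·cos(2π f p T_s) ]. -/
/-!
With `α = 2π f Tₛ`, the product-to-sum formula splits each term into the constant `cos (p α) / 2`
and half a cosine whose phase advances by `2α` per step; the latter sum is the classical closed form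
of a cosine sum in arithmetic progression (`Real.sin_mul_sum_cos`).
-/

open Real Finset

theorem sin_mul_sum_range_cos_two_mul_add (m : ℕ) (α b : ℝ) :
    sin α * ∑ k ∈ range m, cos (2 * α * k + b) = sin (m * α) * cos ((m - 1) * α + b) := by
  simpa [mul_div_assoc, mul_div_cancel_left₀] using sin_mul_sum_cos m (2 * α) b

theorem sum_Icc_cos_mul_cos_lag (α φ : ℝ) (hα : sin α ≠ 0) (N p : ℕ) (hp : p ≤ N) :
    ∑ n ∈ Icc (p + 1) N, cos (n * α + φ) * cos ((n - p) * α + φ)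
      = 1 / 2 * (cos ((N + 1) * α + 2 * φ) * sin ((N - p) * α) / sin α
          + (N - p) * cos (p * α)) := by
  obtain ⟨m, rfl⟩ := Nat.exists_eq_add_of_le hp
  have hterm (k : ℕ) :
      cos (((p + 1 + k : ℕ) : ℝ) * α + φ) * cos ((((p + 1 + k : ℕ) : ℝ) - p) * α + φ)
        = (cos (2 * α * k + ((p + 2) * α + 2 * φ)) + cos (p * α)) / 2 := by
    rw [eq_div_iff two_ne_zero, mul_comm _ (2 : ℝ), ← mul_assoc, two_mul_cos_mul_cos, add_comm]
    push_cast
    ring_nf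
  have hsum : ∑ k ∈ range m, cos (2 * α * k + ((p + 2) * α + 2 * φ))
      = sin (m * α) * cos ((m - 1) * α + ((p + 2) * α + 2 * φ)) / sin α := by
    rw [eq_div_iff hα, mul_comm, sin_mul_sum_range_cos_two_mul_add]
  rw [← Ico_add_one_right_eq_Icc, sum_Ico_eq_sum_range, show p + m + 1 - (p + 1) = m by omega]
  simp only [hterm, ← sum_div, sum_add_distrib, sum_const, card_range, nsmul_eq_mul, hsum]
  push_cast
  rw [show ((p : ℝ) + m + 1) * α + 2 * φ = (m - 1) * α + ((p + 2) * α + 2 * φ) by ring,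
    show ((p : ℝ) + m - p) = m by ring]
  ring

theorem stmt4_general (f φ Ts : ℝ)
    (hs : Real.sin (2 * π * f * Ts) ≠ 0)
    (N p : ℕ) (hp : p < N) :
    ∑ n ∈ Finset.Icc (p + 1) N,
        Real.cos (2 * π * f * n * Ts + φ)
          * Real.cos (2 * π * f * ((n : ℝ) - p) * Ts + φ)
      = (1 / 2) * (Real.cos (2 * π * f * ((N : ℝ) + 1) * Ts + 2 * φ)
            * Real.sin (2 * π * f * ((N : ℝ) - p) * Ts)
            / Real.sin (2 * π * f * Ts)
          + ((N : ℝ) - p) * Real.cos (2 * π * f * p * Ts)) := by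
  have hphase (x : ℝ) : 2 * π * f * x * Ts = x * (2 * π * f * Ts) := by ring
  simp only [hphase]
  exact sum_Icc_cos_mul_cos_lag _ φ hs N p hp.le

/-- Closed form for the lag-`p` autocorrelation of the amplitude
sensitivity of the sinusoidal model. -/
theorem stmt4 (f φ Ts : ℝ) (hTs : 0 < Ts)
    (hs : Real.sin (2 * π * f * Ts) ≠ 0)
    (N p : ℕ) (hp : p < N) :
    ∑ n ∈ Finset.Icc (p + 1) N,
        Real.cos (2 * π * f * n * Ts + φ)
          * Real.cos (2 * π * f * ((n : ℝ) - p) * Ts + φ)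
      = (1 / 2) * (Real.cos (2 * π * f * ((N : ℝ) + 1) * Ts + 2 * φ)
            * Real.sin (2 * π * f * ((N : ℝ) - p) * Ts)
            / Real.sin (2 * π * f * Ts)
          + ((N : ℝ) - p) * Real.cos (2 * π * f * p * Ts)) :=
  stmt4_general f φ Ts hs N p hp
end

section
/- For real f, φ with sin(2π f T_s) ≠ 0 and integers 0 ≤ p < N, ∑_{n=p+1}^{N} sin(2π f n T_s + φ)·sin(2π f (n−p) T_s + φ) = (1/2)·[ −cos(2π f (N+1) T_s + 2φ) · sin(2π f (N−p) T_s)/sin(2π f T_s) + (N−p)·cos(2π f p T_s) ]. -/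
open Real Finset

lemma tele (c d : ℝ) (p : ℕ) : ∀ N : ℕ, p ≤ N →
    ∑ n ∈ Finset.Icc (p + 1) N, 2 * Real.sin d * Real.cos (c + 2 * d * n)
      = Real.sin (c + d * (2 * (N : ℝ) + 1)) - Real.sin (c + d * (2 * (p : ℝ) + 1)) := by
  have h2 : ∀ x : ℝ, 2 * Real.sin d * Real.cos x = Real.sin (x + d) - Real.sin (x - d) := by
    intro x; rw [Real.sin_add, Real.sin_sub]; ring
  intro N
  induction N with
  | zero =>
    intro h
    interval_cases p
    simp
  | succ N ih =>
    intro h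
    rcases eq_or_lt_of_le h with h' | h'
    · subst h'
      rw [Finset.Icc_eq_empty (by omega)]
      simp
    · have hpN : p ≤ N := by omega
      rw [Finset.sum_Icc_succ_top (by omega), ih hpN]
      push_cast
      rw [h2 (c + 2 * d * ((N : ℝ) + 1))]
      ring_nf

lemma prodsum (a b : ℝ) : Real.sin a * Real.sin b
    = (Real.cos (a - b) - Real.cos (a + b)) / 2 := by
  rw [Real.cos_sub, Real.cos_add]; ring

/-- Closed form for the lag-`p` autocorrelation of the phase
sensitivity of the sinusoidal model. -/
theorem stmt5 (f φ Ts : ℝ) (hTs : 0 < Ts)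
    (hs : Real.sin (2 * π * f * Ts) ≠ 0)
    (N p : ℕ) (hp : p < N) :
    ∑ n ∈ Finset.Icc (p + 1) N,
        Real.sin (2 * π * f * n * Ts + φ)
          * Real.sin (2 * π * f * ((n : ℝ) - p) * Ts + φ)
      = (1 / 2) * (-Real.cos (2 * π * f * ((N : ℝ) + 1) * Ts + 2 * φ)
            * Real.sin (2 * π * f * ((N : ℝ) - p) * Ts)
            / Real.sin (2 * π * f * Ts)
          + ((N : ℝ) - p) * Real.cos (2 * π * f * p * Ts)) := by
  set d : ℝ := 2 * π * f * Ts with hd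
  set c : ℝ := 2 * φ - (p : ℝ) * d with hc
  have hstep : ∀ n ∈ Finset.Icc (p + 1) N,
      Real.sin (2 * π * f * n * Ts + φ) * Real.sin (2 * π * f * ((n : ℝ) - p) * Ts + φ)
        = (Real.cos (2 * π * f * (p : ℝ) * Ts) - Real.cos (c + 2 * d * n)) / 2 := by
    intro n _
    rw [prodsum]
    congr 3
    · ring
    · rw [hc, hd]; ring
  rw [Finset.sum_congr rfl hstep]
  have hcard : ((Finset.Icc (p + 1) N).card : ℝ) = (N : ℝ) - p := by
    rw [Nat.card_Icc]
    have : N + 1 - (p + 1) = N - p := by omega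
    rw [this]
    push_cast [Nat.cast_sub hp.le]
    ring
  have key := tele c d p N hp.le
  rw [← Finset.mul_sum] at key
  have hS : ∑ n ∈ Finset.Icc (p + 1) N, Real.cos (c + 2 * d * n)
      = Real.cos (2 * π * f * ((N : ℝ) + 1) * Ts + 2 * φ)
          * Real.sin (2 * π * f * ((N : ℝ) - p) * Ts) / Real.sin d := by
    rw [eq_div_iff hs]
    rw [Real.sin_sub_sin] at key
    have e1 : 2 * π * f * ((N : ℝ) - p) * Ts
        = (c + d * (2 * (N : ℝ) + 1) - (c + d * (2 * (p : ℝ) + 1))) / 2 := by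
      rw [hd]; ring
    have e2 : 2 * π * f * ((N : ℝ) + 1) * Ts + 2 * φ
        = (c + d * (2 * (N : ℝ) + 1) + (c + d * (2 * (p : ℝ) + 1))) / 2 := by
      rw [hc, hd]; ring
    rw [e1, e2]
    linear_combination key / 2
  have expand : ∑ x ∈ Finset.Icc (p + 1) N,
      (Real.cos (2 * π * f * (p : ℝ) * Ts) - Real.cos (c + 2 * d * x)) / 2
      = (((Finset.Icc (p + 1) N).card : ℝ) * Real.cos (2 * π * f * (p : ℝ) * Ts)
          - ∑ x ∈ Finset.Icc (p + 1) N, Real.cos (c + 2 * d * x)) / 2 := by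
    rw [← Finset.sum_div, Finset.sum_sub_distrib, Finset.sum_const, nsmul_eq_mul]
  rw [expand, hS, hcard]
  field_simp
  ring
end
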